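/- The erasure-adjusted error polynomial Ê(x) = Λ_ρ(x)E(x) satisfies a key equation A(x)M_n(x) = Λ_τ(x)Ê(x) for some polynomial A(x) ∈ F[x] with deg A < deg Λ_ρ + deg Λ_τ. -/

import Mathlib

open Polynomial

open scoped Classical

/-
Positions outside `S_ρ ∪ S_τ` are those with `m_i ∣ E`; the `m_i` are pairwise coprime, so the
product `D` of these `m_i` divides `E`, say `E = D * Q`. Since `M_n = Λ_ρ Λ_τ D`, taking `A = Q`
gives `A M_n = Λ_τ Λ_ρ E`, and `deg A = deg E - deg D < deg M_n - deg D = deg Λ_ρ + deg Λ_τ`.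
-/

namespace Polynomial

variable {K : Type*} [Field K]

theorem isCoprime_of_monic_of_irreducible_of_ne {p q : K[X]} (hp : p.Monic) (hq : q.Monic)
    (hpi : Irreducible p) (hqi : Irreducible q) (hne : p ≠ q) : IsCoprime p q :=
  (hpi.isCoprime_or_dvd q).resolve_right fun h =>
    hne (eq_of_monic_of_associated hp hq (hpi.associated_of_dvd hqi h))

theorem exists_mul_eq_mul_and_degree_lt_of_dvd {M L D E : K[X]} (hM : M = L * D) (hM0 : M ≠ 0)
    (hDE : D ∣ E) (hE : E.degree < M.degree) :
    ∃ A : K[X], A * M = L * E ∧ A.degree < L.degree := by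
  obtain ⟨A, rfl⟩ := hDE
  have hL : L ≠ 0 := left_ne_zero_of_mul (hM ▸ hM0)
  have hkey : A * M = L * (D * A) := by rw [hM]; ring
  refine ⟨A, hkey, ?_⟩
  rw [← WithBot.add_lt_add_iff_right (degree_ne_bot.mpr hM0), ← degree_mul, hkey, degree_mul]
  exact WithBot.add_lt_add_left (degree_ne_bot.mpr hL) hE

end Polynomial

/-- Key equation I: with `Ê = Λ_ρ · E`, there exists `A` with
`A · M_n = Λ_τ · Ê` and `deg A < deg Λ_ρ + deg Λ_τ`. -/
theorem stmt_6 {F : Type*} [Field F] (n : ℕ)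
    (m : Fin n → F[X]) (hm : ∀ i, (m i).Monic) (hirr : ∀ i, Irreducible (m i))
    (hinj : Function.Injective m)
    (E : F[X]) (hEdeg : E.degree < (∏ i, m i).degree)
    (Sρ Sτ : Finset (Fin n)) (hdisj : Disjoint Sρ Sτ)
    (hsupp : Finset.univ.filter (fun i => ¬ m i ∣ E) = Sρ ∪ Sτ) :
    ∃ A : F[X],
      A * ∏ i, m i = (∏ i ∈ Sτ, m i) * ((∏ i ∈ Sρ, m i) * E) ∧
      A.degree < (∏ i ∈ Sρ, m i).degree + (∏ i ∈ Sτ, m i).degree := by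
  have hcoprime : Pairwise (Function.onFun IsCoprime m) := fun i j hij =>
    isCoprime_of_monic_of_irreducible_of_ne (hm i) (hm j) (hirr i) (hirr j) (hinj.ne hij)
  have hdvd : (∏ i ∈ (Sρ ∪ Sτ)ᶜ, m i) ∣ E := by
    refine Finset.prod_dvd_of_coprime (hcoprime.set_pairwise _) fun i hi => ?_
    simpa [← hsupp] using hi
  have hsplit : ∏ i, m i = ((∏ i ∈ Sτ, m i) * ∏ i ∈ Sρ, m i) * ∏ i ∈ (Sρ ∪ Sτ)ᶜ, m i := by
    rw [mul_comm (∏ i ∈ Sτ, m i), ← Finset.prod_union hdisj, Finset.prod_mul_prod_compl]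
  obtain ⟨A, hA, hdeg⟩ := exists_mul_eq_mul_and_degree_lt_of_dvd hsplit
    (monic_prod_of_monic _ _ fun i _ => hm i).ne_zero hdvd hEdeg
  refine ⟨A, by rw [hA, mul_assoc], ?_⟩
  rwa [degree_mul, add_comm] at hdeg
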